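/- Let Φ₀ : Pic′ → Pic be the ℤ-linear map defined on the basis by Φ₀(H_q) = 2H_x + H_y − F₁ − F₃ − F₄ − F₇, Φ₀(H_p) = H_x, Φ₀(E₁) = H_x − F₁, Φ₀(E₂) = F₂, Φ₀(E₃) = H_x − F₇, Φ₀(E₄) = F₈, Φ₀(E₅) = H_x − F₄, Φ₀(E₆) = H_x − F₃, Φ₀(E₇) = F₅, Φ₀(E₈) = F₆, and let Ψ₀ : Pic → Pic′ be the ℤ-linear map defined by Ψ₀(H_x) = H_p, Ψ₀(H_y) = H_q + 2H_p − E₁ − E₃ − E₅ − E₆, Ψ₀(F₁) = H_p − E₁, Ψ₀(F₂) = E₂, Ψ₀(F₃) = H_p − E₆, Ψ₀(F₄) = H_p − E₅, Ψ₀(F₅) = E₇, Ψ₀(F₆) = E₈, Ψ₀(F₇) = H_p − E₃, Ψ₀(F₈) = E₄. Then: (i) Ψ₀ ∘ Φ₀ and Φ₀ ∘ Ψ₀ are the identity maps; (ii) Φ₀ preserves the intersection forms; (iii) Φ₀ maps the standard surface roots E₁−E₂, E₃−E₄, H_q−E₁−E₃, H_p−E₅−E₇, E₅−E₆, E₇−E₈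 respectively to the Laguerre surface roots H_x−F₁−F₂, H_x−F₇−F₈, H_y−F₃−F₄, F₄−F₅, F₃−F₄, F₅−F₆; and (iv) Φ₀ maps the standard symmetry roots H_p−E₁−E₂, H_q−E₅−E₆, H_p−E₃−E₄, H_q−E₇−E₈ respectively to the preliminary Laguerre symmetry roots F₁−F₂, H_y−F₁−F₇, F₇−F₈, 2H_x+H_y−F₁−F₃−F₄−F₅−F₆−F₇. -/

import Mathlib

/-- The Picard lattice `Pic` of the blown-up surface: the free `ℤ`-module of rank 10 with basis
`H_x, H_y, F₁, …, F₈`. -/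
abbrev Pic : Type := Fin 10 → ℤ

/-- The `i`-th basis vector of `Pic`. -/
def bv (i : Fin 10) : Pic := fun j => if j = i then 1 else 0

/-- The class `H_x` of a vertical line. -/
def Hx : Pic := bv 0

/-- The class `H_y` of a horizontal line. -/
def Hy : Pic := bv 1

/-- The class `F (k)` of the exceptional divisor `F_{k+1}` (so `F 0 = F₁`, …, `F 7 = F₈`). -/
def F (k : Fin 8) : Pic := bv ⟨k.val + 2, by omega⟩

/-- The intersection form on `Pic`: `H_x•H_x = H_y•H_y = 0`, `H_x•H_y = 1`,
`H_x•F_i = H_y•F_i = 0`, `F_i•F_j = −δ_{ij}`. -/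
def inter (v w : Pic) : ℤ :=
  v 0 * w 1 + v 1 * w 0 - ∑ k : Fin 8, v ⟨k.val + 2, by omega⟩ * w ⟨k.val + 2, by omega⟩


/-- The Picard lattice `Pic′` of the standard `D₅⁽¹⁾` Sakai surface: the free `ℤ`-module of
rank 10 with basis `H_q, H_p, E₁, …, E₈` (realized on the same underlying coordinate module,
with the same intersection form `inter`). -/
abbrev Pic' : Type := Fin 10 → ℤ

/-- The class `H_q`. -/
def Hq : Pic' := bv 0

/-- The class `H_p`. -/
def Hp : Pic' := bv 1

/-- The class `E (k)` of the exceptional divisor `E_{k+1}` (so `E 0 = E₁`, …, `E 7 = E₈`). -/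
def E (k : Fin 8) : Pic' := bv ⟨k.val + 2, by omega⟩


/-!
Both maps are prescribed on bases, so they are the linear maps of explicit integer matrices `Φ` and
`Ψ`. Claims (i) and (ii) become the matrix identities `ΨΦ = ΦΨ = 1` and `ΦᵀGΦ = G`, where `G` is
the Gram matrix of the intersection form, and these are checked by evaluation. The root images in
(iii) and (iv) follow from linearity alone.
-/

open Matrix

theorem bv_eq_single (i : Fin 10) : bv i = Pi.single i 1 := by
  ext j
  simp [bv, Pi.single_apply]

theorem LinearMap.eq_toLin'_of_apply_single {R n m : Type*} [CommSemiring R] [Fintype n]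
    [DecidableEq n] {f : (n → R) →ₗ[R] m → R} {M : Matrix m n R}
    (h : ∀ j, f (Pi.single j 1) = M.col j) : f = toLin' M :=
  (Pi.basisFun R n).ext fun j => by rw [Pi.basisFun_apply, toLin'_apply, mulVec_single_one, h]

theorem LinearMap.compl₁₂_toLin'_eq_self {R n : Type*} [CommRing R] [Fintype n] [DecidableEq n]
    {B : (n → R) →ₗ[R] (n → R) →ₗ[R] R} {M : Matrix n n R}
    (h : Mᵀ * toMatrix₂' R B * M = toMatrix₂' R B) : B.compl₁₂ (toLin' M) (toLin' M) = B :=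
  (toMatrix₂' R).injective <| by rw [toMatrix₂'_compl₁₂, toMatrix'_toLin', h]

def interForm : LinearMap.BilinForm ℤ Pic :=
  LinearMap.mk₂ ℤ inter
    (fun _ _ _ => by simp only [inter, Pi.add_apply, add_mul, Finset.sum_add_distrib]; ring)
    (fun _ _ _ => by
      simp only [inter, Pi.smul_apply, smul_eq_mul, mul_assoc, ← Finset.mul_sum]; ring)
    (fun _ _ _ => by simp only [inter, Pi.add_apply, mul_add, Finset.sum_add_distrib]; ring)
    (fun c v _ => by
      simp only [inter, Pi.smul_apply, smul_eq_mul, mul_left_comm (v _) c, ← Finset.mul_sum]; ring)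

def interMatrix : Matrix (Fin 10) (Fin 10) ℤ :=
  of fun i j => inter (bv i) (bv j)

theorem toMatrix₂'_interForm : LinearMap.toMatrix₂' ℤ interForm = interMatrix := by
  ext i j
  simp [interForm, interMatrix, bv_eq_single]

/-- The columns are the prescribed images of `H_q, H_p, E₁, …, E₈`. -/
def phiMatrix : Matrix (Fin 10) (Fin 10) ℤ :=
  (of ![(2 : ℤ) • Hx + Hy - F 0 - F 2 - F 3 - F 6, Hx, Hx - F 0, F 1, Hx - F 6, F 7,
    Hx - F 3, Hx - F 2, F 4, F 5])ᵀ

def psiMatrix : Matrix (Fin 10) (Fin 10) ℤ :=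
  (of ![Hp, Hq + (2 : ℤ) • Hp - E 0 - E 2 - E 4 - E 5, Hp - E 0, E 1, Hp - E 5,
    Hp - E 4, E 6, E 7, Hp - E 2, E 3])ᵀ

theorem psiMatrix_mul_phiMatrix : psiMatrix * phiMatrix = 1 := by decide +kernel

theorem phiMatrix_mul_psiMatrix : phiMatrix * psiMatrix = 1 := by decide +kernel

theorem transpose_phiMatrix_mul_interMatrix_mul_phiMatrix :
    phiMatrixᵀ * interMatrix * phiMatrix = interMatrix := by decide +kernel

/-- The preliminary change of basis `Φ₀ : Pic′ → Pic` of Lemma 4 of the paper and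
its inverse `Ψ₀` are mutually inverse lattice isometries, `Φ₀` matches the standard surface root
basis with the Laguerre surface root basis, and `Φ₀` maps the standard symmetry roots to the
preliminary Laguerre symmetry roots. -/
theorem preliminary_change_of_basis
    (Φ₀ : Pic' →ₗ[ℤ] Pic) (Ψ₀ : Pic →ₗ[ℤ] Pic')
    (hHq : Φ₀ Hq = (2 : ℤ) • Hx + Hy - F 0 - F 2 - F 3 - F 6)
    (hHp : Φ₀ Hp = Hx)
    (hE1 : Φ₀ (E 0) = Hx - F 0)
    (hE2 : Φ₀ (E 1) = F 1)
    (hE3 : Φ₀ (E 2) = Hx - F 6)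
    (hE4 : Φ₀ (E 3) = F 7)
    (hE5 : Φ₀ (E 4) = Hx - F 3)
    (hE6 : Φ₀ (E 5) = Hx - F 2)
    (hE7 : Φ₀ (E 6) = F 4)
    (hE8 : Φ₀ (E 7) = F 5)
    (hHx : Ψ₀ Hx = Hp)
    (hHy : Ψ₀ Hy = Hq + (2 : ℤ) • Hp - E 0 - E 2 - E 4 - E 5)
    (hF1 : Ψ₀ (F 0) = Hp - E 0)
    (hF2 : Ψ₀ (F 1) = E 1)
    (hF3 : Ψ₀ (F 2) = Hp - E 5)
    (hF4 : Ψ₀ (F 3) = Hp - E 4)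
    (hF5 : Ψ₀ (F 4) = E 6)
    (hF6 : Ψ₀ (F 5) = E 7)
    (hF7 : Ψ₀ (F 6) = Hp - E 2)
    (hF8 : Ψ₀ (F 7) = E 3) :
    (∀ v : Pic', Ψ₀ (Φ₀ v) = v) ∧ (∀ w : Pic, Φ₀ (Ψ₀ w) = w) ∧
    (∀ v w : Pic', inter (Φ₀ v) (Φ₀ w) = inter v w) ∧
    (Φ₀ (E 0 - E 1) = Hx - F 0 - F 1 ∧
     Φ₀ (E 2 - E 3) = Hx - F 6 - F 7 ∧
     Φ₀ (Hq - E 0 - E 2) = Hy - F 2 - F 3 ∧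
     Φ₀ (Hp - E 4 - E 6) = F 3 - F 4 ∧
     Φ₀ (E 4 - E 5) = F 2 - F 3 ∧
     Φ₀ (E 6 - E 7) = F 4 - F 5) ∧
    (Φ₀ (Hp - E 0 - E 1) = F 0 - F 1 ∧
     Φ₀ (Hq - E 4 - E 5) = Hy - F 0 - F 6 ∧
     Φ₀ (Hp - E 2 - E 3) = F 6 - F 7 ∧
     Φ₀ (Hq - E 6 - E 7) = (2 : ℤ) • Hx + Hy - F 0 - F 2 - F 3 - F 4 - F 5 - F 6) := by
  have hΦ : Φ₀ = toLin' phiMatrix := LinearMap.eq_toLin'_of_apply_single fun j => by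
    rw [← bv_eq_single]
    fin_cases j
    exacts [hHq, hHp, hE1, hE2, hE3, hE4, hE5, hE6, hE7, hE8]
  have hΨ : Ψ₀ = toLin' psiMatrix := LinearMap.eq_toLin'_of_apply_single fun j => by
    rw [← bv_eq_single]
    fin_cases j
    exacts [hHx, hHy, hF1, hF2, hF3, hF4, hF5, hF6, hF7, hF8]
  have hinter : interForm.compl₁₂ Φ₀ Φ₀ = interForm := by
    rw [hΦ]
    refine LinearMap.compl₁₂_toLin'_eq_self ?_
    rw [toMatrix₂'_interForm, transpose_phiMatrix_mul_interMatrix_mul_phiMatrix]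
  refine ⟨fun v => ?_, fun w => ?_, fun v w => LinearMap.congr_fun₂ hinter v w, ?_, ?_⟩
  · rw [hΦ, hΨ, toLin'_apply, toLin'_apply, mulVec_mulVec, psiMatrix_mul_phiMatrix, one_mulVec]
  · rw [hΦ, hΨ, toLin'_apply, toLin'_apply, mulVec_mulVec, phiMatrix_mul_psiMatrix, one_mulVec]
  all_goals
    and_intros <;> simp only [map_sub, hHq, hHp, hE1, hE2, hE3, hE4, hE5, hE6, hE7, hE8] <;> abel
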